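/- arXiv:1309.2712 — 5 statements merged into one kernel-verified Lean document; each statement's English description precedes it below -/
import Mathlib

section
/- Let E be an m×M matrix over a finite field F_q and let C_E be the linear code generated by the rows of E, with minimum distance d(C_E). For any nonzero vector v in F_q^M with Hamming weight less than d(C_E) and any target value s̃ in F_q, the affine system {E x^t = 0, v x^t = s̃} has a solution x in F_q^M. -/
/-!
If the system had no solution for some `s`, then `v ⬝ x = 0` on the whole kernel of `E`, so `v`
would lie in the orthogonal complement of that kernel, which is the row space of `E`. A nonzero
codeword `v` cannot have weight smaller than the minimum distance.
-/

namespace Matrix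

variable {K m n : Type*} [Field K] [Fintype m] [Fintype n]

theorem exists_vecMul_eq_of_dotProduct_eq_zero_of_mulVec_eq_zero (E : Matrix m n K) (v : n → K)
    (hv : ∀ x, E *ᵥ x = 0 → v ⬝ᵥ x = 0) : ∃ c : m → K, c ᵥ* E = v := by
  classical
  have hker : dotProductEquiv K n v ∈ (LinearMap.ker E.mulVecLin).dualAnnihilator :=
    (Submodule.mem_dualAnnihilator _).2 fun x hx => hv x hx
  obtain ⟨φ, hφ⟩ := (LinearMap.range_dualMap_eq_dualAnnihilator_ker E.mulVecLin).ge hker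
  refine ⟨(dotProductEquiv K m).symm φ, dotProduct_eq _ _ fun x => ?_⟩
  have hc : ((dotProductEquiv K m).symm φ) ⬝ᵥ (E *ᵥ x) = φ (E *ᵥ x) :=
    LinearMap.congr_fun ((dotProductEquiv K m).apply_symm_apply φ) _
  rw [← dotProduct_mulVec, hc]
  exact LinearMap.congr_fun hφ x

theorem exists_mulVec_eq_zero_and_dotProduct_eq (E : Matrix m n K) {v : n → K}
    (hv : ∀ c : m → K, c ᵥ* E ≠ v) (s : K) : ∃ x, E *ᵥ x = 0 ∧ v ⬝ᵥ x = s := by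
  obtain ⟨x₀, hx₀, hvx₀⟩ : ∃ x₀, E *ᵥ x₀ = 0 ∧ v ⬝ᵥ x₀ ≠ 0 := by
    by_contra! h
    obtain ⟨c, hc⟩ := exists_vecMul_eq_of_dotProduct_eq_zero_of_mulVec_eq_zero E v h
    exact hv c hc
  refine ⟨(s / v ⬝ᵥ x₀) • x₀, by rw [mulVec_smul, hx₀, smul_zero], ?_⟩
  rw [dotProduct_smul, smul_eq_mul, div_mul_cancel₀ s hvx₀]

end Matrix

theorem stmt0_general {F : Type*} [Field F] [DecidableEq F]
    {m M : ℕ} (E : Matrix (Fin m) (Fin M) F)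
    (v : Fin M → F) (hv0 : v ≠ 0)
    (hv : ∀ α : Fin m → F, Matrix.vecMul α E ≠ 0 →
      hammingNorm v < hammingNorm (Matrix.vecMul α E))
    (s : F) :
    ∃ x : Fin M → F, Matrix.mulVec E x = 0 ∧ dotProduct v x = s := by
  refine E.exists_mulVec_eq_zero_and_dotProduct_eq (fun α hα => ?_) s
  have hlt := hv α (hα ▸ hv0)
  rw [hα] at hlt
  exact lt_irrefl _ hlt

/-- If `v` is a nonzero vector whose Hamming weight is smaller than the
weight of every nonzero codeword of the row-space code of `E` (i.e. smaller than the
minimum distance of `C_E`), then for every target `s` the system `E x = 0`, `v ⬝ x = s`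
has a solution. -/
theorem stmt0 {F : Type*} [Field F] [Fintype F] [DecidableEq F]
    {m M : ℕ} (E : Matrix (Fin m) (Fin M) F)
    (v : Fin M → F) (hv0 : v ≠ 0)
    (hv : ∀ α : Fin m → F, Matrix.vecMul α E ≠ 0 →
      hammingNorm v < hammingNorm (Matrix.vecMul α E))
    (s : F) :
    ∃ x : Fin M → F, Matrix.mulVec E x = 0 ∧ dotProduct v x = s :=
  stmt0_general E v hv0 hv s
end

section
/- Let E be an m×M matrix over a finite field F_q, let f be uniformly distributed over F_q^M, and let u = E f^t be observed. Then for every nonzero vector v of Hamming weight less than d(C_E) (the minimum distance of the row-space code of E), the conditional distribution of v f^t given E f^t = u is uniform over F_q; i.e., the mutual information I(v f^t ; E f^t) = 0. -/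
/-!
Since `v` is nonzero and lighter than every nonzero codeword of the row space of `E`, it is
not itself a codeword. The row space is the annihilator of `ker E`, so some `g ∈ ker E` has
`v ⬝ g ≠ 0`. Translating `f` by multiples of `g` leaves `E f` unchanged and shifts `v ⬝ f` by
any prescribed amount, which identifies the fibres over all values `s`.
-/

open Matrix

theorem Matrix.exists_vecMul_eq_of_forall_mulVec_eq_zero {K m n : Type*} [Field K]
    [Fintype m] [Fintype n] [DecidableEq m] [DecidableEq n] (E : Matrix m n K) (v : n → K)
    (h : ∀ g, E *ᵥ g = 0 → v ⬝ᵥ g = 0) : ∃ α, α ᵥ* E = v := by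
  have hmem : dotProductEquiv K n v ∈ (LinearMap.ker (mulVecLin E)).dualAnnihilator :=
    (Submodule.mem_dualAnnihilator _).2 h
  rw [← LinearMap.range_dualMap_eq_dualAnnihilator_ker] at hmem
  obtain ⟨ψ, hψ⟩ := hmem
  refine ⟨(dotProductEquiv K m).symm ψ, (dotProductEquiv K n).injective <|
    LinearMap.ext fun g ↦ ?_⟩
  calc dotProductEquiv K n ((dotProductEquiv K m).symm ψ ᵥ* E) g
      = dotProductEquiv K m ((dotProductEquiv K m).symm ψ) (E *ᵥ g) :=
        (dotProduct_mulVec _ _ _).symm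
    _ = ψ (E *ᵥ g) := by rw [LinearEquiv.apply_symm_apply]
    _ = dotProductEquiv K n v g := LinearMap.congr_fun hψ g

theorem LinearMap.card_fiber_eq_of_mem_ker {K V W : Type*} [Field K] [AddCommGroup V]
    [Module K V] [AddCommGroup W] [Module K W] (L : V →ₗ[K] W) (φ : V →ₗ[K] K) {g : V}
    (hg : L g = 0) (hφg : φ g ≠ 0) (u : W) (s s' : K) :
    Nat.card {x // L x = u ∧ φ x = s} = Nat.card {x // L x = u ∧ φ x = s'} :=
  Nat.card_congr <| (Equiv.addRight (((s' - s) / φ g) • g)).subtypeEquiv fun x ↦ by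
    simp [hg, div_mul_cancel₀ _ hφg, ← eq_sub_iff_add_eq]

theorem stmt1_general {F : Type*} [Field F] [DecidableEq F]
    {m M : ℕ} (E : Matrix (Fin m) (Fin M) F)
    (v : Fin M → F) (hv0 : v ≠ 0)
    (hv : ∀ α : Fin m → F, Matrix.vecMul α E ≠ 0 →
      hammingNorm v < hammingNorm (Matrix.vecMul α E))
    (u : Fin m → F)
    (s s' : F) :
    Nat.card {f : Fin M → F // Matrix.mulVec E f = u ∧ dotProduct v f = s} =
      Nat.card {f : Fin M → F // Matrix.mulVec E f = u ∧ dotProduct v f = s'} := by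
  obtain ⟨g, hg, hvg⟩ : ∃ g, E *ᵥ g = 0 ∧ v ⬝ᵥ g ≠ 0 := by
    by_contra! h
    obtain ⟨α, rfl⟩ := E.exists_vecMul_eq_of_forall_mulVec_eq_zero v h
    exact (hv α hv0).false
  exact (mulVecLin E).card_fiber_eq_of_mem_ker (dotProductEquiv F (Fin M) v) hg hvg u s s'

/-- For a uniformly distributed file `f`, the conditional distribution of
`v ⬝ f` given `E f = u` is uniform, for every nonzero `v` of Hamming weight less than the
minimum distance of the row-space code of `E`.  Equivalently (counting formulation of zero
mutual information): for every realizable observation `u` and every pair of values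
`s, s'`, the number of files consistent with `u` and value `s` equals the number
consistent with `u` and value `s'`. -/
theorem stmt1 {F : Type*} [Field F] [Fintype F] [DecidableEq F]
    {m M : ℕ} (E : Matrix (Fin m) (Fin M) F)
    (v : Fin M → F) (hv0 : v ≠ 0)
    (hv : ∀ α : Fin m → F, Matrix.vecMul α E ≠ 0 →
      hammingNorm v < hammingNorm (Matrix.vecMul α E))
    (u : Fin m → F) (hu : ∃ f : Fin M → F, Matrix.mulVec E f = u)
    (s s' : F) :
    Nat.card {f : Fin M → F // Matrix.mulVec E f = u ∧ dotProduct v f = s} =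
      Nat.card {f : Fin M → F // Matrix.mulVec E f = u ∧ dotProduct v f = s'} :=
  stmt1_general E v hv0 hv u s s'
end

section
/- A Cauchy-based regular-graph MBR code for D(n,k,d) is b-block secure against an adversary of strength ℓ < k, where b = (kd − C(k,2)) − (ℓd − C(ℓ,2)). Formally: if G is an (nd/2)×M matrix over F_q (M = kd − C(k,2), nd/2 ≥ M) all of whose square submatrices are invertible, c = G f^t, and E is the submatrix of G consisting of any ℓd − C(ℓ,2) rows (the coded units seen by the adversary), then no nontrivial linear combination of at most b coordinates of f can be deduced from E f^t; equivalently the row-space code of E has minimum distance b + 1. -/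
/-!
A nonzero codeword `α ᵥ* E` of weight at most `M - R` vanishes on at least `R` coordinates.
The `R × R` minor of `E` on those columns is invertible, and `α` times it is zero, so `α = 0`.
-/

open Finset Function

theorem card_filter_eq_zero_add_hammingNorm {ι : Type*} [Fintype ι] {β : ι → Type*}
    [∀ i, Zero (β i)] [∀ i, DecidableEq (β i)] (x : ∀ i, β i) :
    #{i | x i = 0} + hammingNorm x = Fintype.card ι :=
  card_filter_add_card_filter_not _

namespace Matrix

variable {R m ι : Type*} [CommRing R] [Fintype m] [DecidableEq m]

theorem eq_zero_of_vecMul_comp_eq_zero {A : Matrix m ι R} {J : m → ι}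
    (hJ : IsUnit (A.submatrix id J).det) {α : m → R} (hα : (α ᵥ* A) ∘ J = 0) : α = 0 :=
  vecMul_injective_of_isUnit ((isUnit_iff_isUnit_det _).2 hJ) <|
    hα.trans (zero_vecMul _).symm

theorem card_sub_card_lt_hammingNorm_vecMul [Fintype ι] [DecidableEq R] (A : Matrix m ι R)
    (hA : ∀ J : m → ι, Injective J → IsUnit (A.submatrix id J).det) {α : m → R}
    (hα : α ᵥ* A ≠ 0) : Fintype.card ι - Fintype.card m < hammingNorm (α ᵥ* A) := by
  by_contra! hle
  have hpos : 0 < hammingNorm (α ᵥ* A) := hammingNorm_pos_iff.2 hα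
  have hzeros : Fintype.card m ≤ Fintype.card {j // (α ᵥ* A) j = 0} := by
    have := card_filter_eq_zero_add_hammingNorm (α ᵥ* A)
    rw [Fintype.card_subtype]
    omega
  obtain ⟨e⟩ := Function.Embedding.nonempty_of_card_le hzeros
  refine hα ?_
  rw [eq_zero_of_vecMul_comp_eq_zero (J := Subtype.val ∘ e)
    (hA _ (Subtype.val_injective.comp e.injective)) (funext fun i => (e i).2), zero_vecMul]

end Matrix

theorem stmt8_general {F : Type*} [Field F] [DecidableEq F]
    (n d M R b : ℕ)
    (hb : b = M - R)
    (G : Matrix (Fin (n * d / 2)) (Fin M) F)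
    (hG : ∀ (r : ℕ) (I : Fin r → Fin (n * d / 2)) (J : Fin r → Fin M),
      Function.Injective I → Function.Injective J →
        IsUnit ((G.submatrix I J).det))
    (ρ : Fin R → Fin (n * d / 2)) (hρ : Function.Injective ρ) :
    ∀ α : Fin R → F, Matrix.vecMul α (G.submatrix ρ id) ≠ 0 →
      b < hammingNorm (Matrix.vecMul α (G.submatrix ρ id)) := by
  intro α hα
  simpa only [hb, Fintype.card_fin] using
    (G.submatrix ρ id).card_sub_card_lt_hammingNorm_vecMul (fun J hJ => hG R ρ J hρ hJ) hα

/-- block security of Cauchy-based regular-graph MBR codes.  If `G` is an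
`(nd/2) × M` encoding matrix (with `M = kd - C(k,2)`) all of whose square submatrices are
invertible, and the adversary observes the `R = ℓd - C(ℓ,2)` coded units `E fᵗ` given by
`R` rows `E` of `G` (with `ℓ < k`), then no nontrivial linear combination of at most
`b = M - R` coordinates of `f` can be deduced: every nonzero codeword of the row-space
code of `E` has Hamming weight greater than `b` (i.e. its minimum distance is `≥ b + 1`). -/
theorem stmt8 {F : Type*} [Field F] [Fintype F] [DecidableEq F]
    (n k d ℓ M R b : ℕ)
    (hM : M = k * d - k * (k - 1) / 2)
    (hR : R = ℓ * d - ℓ * (ℓ - 1) / 2)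
    (hb : b = M - R)
    (hkd : k ≤ d) (hlk : ℓ < k) (hdn : d < n) (hMn : M ≤ n * d / 2)
    (G : Matrix (Fin (n * d / 2)) (Fin M) F)
    (hG : ∀ (r : ℕ) (I : Fin r → Fin (n * d / 2)) (J : Fin r → Fin M),
      Function.Injective I → Function.Injective J →
        IsUnit ((G.submatrix I J).det))
    (ρ : Fin R → Fin (n * d / 2)) (hρ : Function.Injective ρ) :
    ∀ α : Fin R → F, Matrix.vecMul α (G.submatrix ρ id) ≠ 0 →
      b < hammingNorm (Matrix.vecMul α (G.submatrix ρ id)) :=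
  stmt8_general n d M R b hb G hG ρ hρ
end

section
/- Let C_E ⊆ F_q^d be an [d,ℓ] MDS code, L an ℓ-subset of [k] with k ≤ d, and t ∈ [k]\L, with coefficients a_{i,t} such that c_t = Σ_{i∈L} a_{i,t} c_i holds for all codewords c ∈ C_E. Then, given a family of codewords (c_j)_{j∈[d]} of C_E with the symmetry c_j(i) = c_i(j) for all i,j, one has Σ_{i∈L} a_{i,t}(c_t(i)+c_i(t)) − Σ_{i≤j, i,j∈L} a_{i,t}a_{j,t}(c_j(i)+c_i(j))[i<j] − Σ_{i∈L} a_{i,t}^2 c_i(i) = c_t(t). -/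
/-- diagonal recovery identity, Lemma case 1: Let `C` be an `[d, ℓ]` MDS
code, `L ⊆ [k]` an `ℓ`-subset (`k ≤ d`), `t ∈ [k] \ L`, and `a` coefficients with
`c t = ∑_{i ∈ L} a i * c i` for all codewords `c`.  For any family `(c_j)` of codewords
of `C` satisfying the symmetry `c_j(i) = c_i(j)`, the diagonal value `c_t(t)` equals
`∑_{i∈L} a_i (c_t(i) + c_i(t)) − ∑_{i<j∈L} a_i a_j (c_j(i) + c_i(j)) − ∑_{i∈L} a_i² c_i(i)`. -/
theorem stmt13 {F : Type*} [Field F] [Fintype F] [DecidableEq F]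
    {d ℓ k : ℕ} (hld : ℓ ≤ k) (hkd : k ≤ d)
    (C : Submodule F (Fin d → F))
    (hdim : Module.finrank F C = ℓ)
    (hMDS : ∀ c ∈ C, c ≠ 0 → d - ℓ + 1 ≤ hammingNorm c)
    (L : Finset (Fin d)) (hLcard : L.card = ℓ) (hLk : ∀ i ∈ L, (i : ℕ) < k)
    (t : Fin d) (htk : (t : ℕ) < k) (htL : t ∉ L)
    (a : Fin d → F)
    (ha : ∀ c ∈ C, c t = ∑ i ∈ L, a i * c i)
    (c : Fin d → (Fin d → F)) (hc : ∀ j, c j ∈ C)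
    (hsym : ∀ i j, c j i = c i j) :
    (∑ i ∈ L, a i * (c t i + c i t))
      - (∑ i ∈ L, ∑ j ∈ L.filter (fun j => i < j), a i * a j * (c j i + c i j))
      - (∑ i ∈ L, a i ^ 2 * c i i)
      = c t t := by
  have h1 : c t t = ∑ i ∈ L, a i * c t i := ha (c t) (hc t)
  have h2 : ∀ i, c i t = ∑ j ∈ L, a j * c i j := fun i => ha (c i) (hc i)
  set g : Fin d → Fin d → F := fun i j => a i * a j * c i j with hg
  have hS : ∑ i ∈ L, ∑ j ∈ L, g i j
      = (∑ i ∈ L, ∑ j ∈ L.filter (fun j => i < j), (g i j + g j i))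
        + ∑ i ∈ L, g i i := by
    have hsplit : ∀ i ∈ L, ∑ j ∈ L, g i j
        = ∑ j ∈ L.filter (fun j => i < j), g i j
          + (∑ j ∈ L.filter (fun j => j < i), g i j + g i i) := by
      intro i hi
      rw [← Finset.sum_filter_add_sum_filter_not L (fun j => i < j) (g i)]
      congr 1
      have : L.filter (fun j => ¬ i < j) = insert i (L.filter (fun j => j < i)) := by
        ext x
        simp only [Finset.mem_filter, Finset.mem_insert, not_lt]
        constructor
        · rintro ⟨hx, hxi⟩
          rcases lt_or_eq_of_le hxi with h | h
          · exact Or.inr ⟨hx, h⟩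
          · exact Or.inl h
        · rintro (rfl | ⟨hx, hxi⟩)
          · exact ⟨hi, le_refl _⟩
          · exact ⟨hx, le_of_lt hxi⟩
      rw [this, Finset.sum_insert (by simp), add_comm]
    rw [Finset.sum_congr rfl hsplit]
    simp only [Finset.sum_add_distrib]
    have hcomm : ∑ i ∈ L, ∑ j ∈ L.filter (fun j => j < i), g i j
        = ∑ j ∈ L, ∑ i ∈ L.filter (fun i => j < i), g i j := by
      apply Finset.sum_comm'
      intro x y
      simp only [Finset.mem_filter]
      tauto
    rw [hcomm]
    ring
  have key : ∑ i ∈ L, a i * c i t = ∑ i ∈ L, ∑ j ∈ L, g i j := by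
    apply Finset.sum_congr rfl
    intro i _
    rw [h2 i, Finset.mul_sum]
    apply Finset.sum_congr rfl
    intro j _
    simp [hg]; ring
  have hterm : ∀ i ∈ L, ∀ j ∈ L.filter (fun j => i < j),
      g i j + g j i = a i * a j * (c j i + c i j) := by
    intro i _ j _
    simp only [hg]
    rw [hsym i j]
    ring
  have hdiag : ∀ i ∈ L, g i i = a i ^ 2 * c i i := by
    intro i _; simp only [hg]; ring
  calc (∑ i ∈ L, a i * (c t i + c i t))
      - (∑ i ∈ L, ∑ j ∈ L.filter (fun j => i < j), a i * a j * (c j i + c i j))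
      - (∑ i ∈ L, a i ^ 2 * c i i)
      = (∑ i ∈ L, a i * c t i) + (∑ i ∈ L, a i * c i t)
        - (∑ i ∈ L, ∑ j ∈ L.filter (fun j => i < j), (g i j + g j i))
        - (∑ i ∈ L, g i i) := by
        rw [Finset.sum_congr rfl (fun i hi => Finset.sum_congr rfl (hterm i hi)),
          Finset.sum_congr rfl hdiag, ← Finset.sum_add_distrib]
        congr 1
        congr 1
        apply Finset.sum_congr rfl
        intro i _
        ring
    _ = c t t := by rw [key, hS, ← h1]; ring
end

section
/- Let C_E be a linear code in F_q^d such that for every ℓ-subset L of [k] (k ≤ d) each coordinate t ∉ L is a nonzero-coefficient linear combination of coordinates in L on all codewords, and let (c_j)_{j∈[d]} be a family of codewords of C_E. For s ∈ [k], t ∈ [d], s ≠ t, and any ℓ-subset L ⊆ [k], the following holds: Σ_{i∈L} a_{i,t}(c_s(i) + c_i(s)) + Σ_{i∈L} a_{i,s}(c_t(i) + c_i(t)) − Σ_{i≤j, i,j∈L} (a_{i,t}a_{j,s} + a_{i,s}a_{j,t})·(c_j(i) + c_i(j) if i<j, else c_i(i)) = c_t(s) + c_s(t), where a_{i,u} are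 the coefficients with c(u) = Σ_{i∈L} a_{i,u} c(i) for all c ∈ C_E. -/
/-- Symmetrization lemma: a full double sum equals the sum over ordered pairs
`i < j` of the symmetrized terms plus the diagonal. -/
lemma sum_pairs {ι M : Type*} [LinearOrder ι] [AddCommMonoid M]
    (L : Finset ι) (h : ι → ι → M) :
    ∑ i ∈ L, ∑ j ∈ L, h i j
      = (∑ i ∈ L, ∑ j ∈ L.filter (fun j => i < j), (h i j + h j i))
        + ∑ i ∈ L, h i i := by
  have swap : ∑ i ∈ L, ∑ j ∈ L.filter (fun j => i < j), h j i
      = ∑ i ∈ L, ∑ j ∈ L.filter (fun j => j < i), h i j := by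
    simp_rw [Finset.sum_filter]
    rw [Finset.sum_comm]
  have split : ∀ i ∈ L, ∑ j ∈ L, h i j
      = (∑ j ∈ L.filter (fun j => j < i), h i j)
        + (∑ j ∈ L.filter (fun j => i < j), h i j) + h i i := by
    intro i hi
    have h1 : ∑ j ∈ L, h i j
        = (∑ j ∈ L.filter (fun j => j < i), h i j)
          + ∑ j ∈ L.filter (fun j => ¬ j < i), h i j :=
      (Finset.sum_filter_add_sum_filter_not L _ _).symm
    have h2 : L.filter (fun j => ¬ j < i)
        = insert i (L.filter (fun j => i < j)) := by
      ext x
      simp only [Finset.mem_filter, Finset.mem_insert, not_lt]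
      constructor
      · rintro ⟨hx, hix⟩
        rcases eq_or_lt_of_le hix with h | h
        · exact Or.inl h.symm
        · exact Or.inr ⟨hx, h⟩
      · rintro (rfl | ⟨hx, hix⟩)
        · exact ⟨hi, le_refl _⟩
        · exact ⟨hx, le_of_lt hix⟩
    rw [h1, h2, Finset.sum_insert (by simp)]
    abel
  rw [Finset.sum_congr rfl split]
  simp_rw [Finset.sum_add_distrib]
  rw [← swap]
  abel

/-- off-diagonal recovery identity, Lemma case 3: Let `C` be a linear code
in `F_q^d` whose coordinates outside an `ℓ`-subset `L ⊆ [k]` are determined, with nonzero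
coefficients, by the coordinates in `L`; in particular `c s = ∑_{i∈L} a i s * c i` and
`c t = ∑_{i∈L} a i t * c i` for all codewords `c`.  Then for any family `(c_j)_{j∈[d]}`
of codewords of `C` and `s ≠ t`:
`∑_{i∈L} a_{i,t}(c_s(i)+c_i(s)) + ∑_{i∈L} a_{i,s}(c_t(i)+c_i(t))
 − ∑_{i≤j∈L} (a_{i,t}a_{j,s}+a_{i,s}a_{j,t})·(c_j(i)+c_i(j) if i<j else c_i(i))
 = c_t(s) + c_s(t)`. -/
theorem stmt19 {F : Type*} [Field F]
    {d k ℓ : ℕ} (hlk : ℓ ≤ k) (hkd : k ≤ d)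
    (C : Submodule F (Fin d → F))
    (L : Finset (Fin d)) (hLcard : L.card = ℓ) (hLk : ∀ i ∈ L, (i : ℕ) < k)
    (s t : Fin d) (hsk : (s : ℕ) < k) (hst : s ≠ t)
    (a : Fin d → Fin d → F)
    (has : ∀ c ∈ C, c s = ∑ i ∈ L, a i s * c i)
    (hat : ∀ c ∈ C, c t = ∑ i ∈ L, a i t * c i)
    (hnz : ∀ i ∈ L, a i s ≠ 0 ∧ a i t ≠ 0)
    (c : Fin d → (Fin d → F)) (hc : ∀ j, c j ∈ C) :
    (∑ i ∈ L, a i t * (c s i + c i s)) + (∑ i ∈ L, a i s * (c t i + c i t))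
      - (∑ i ∈ L, ∑ j ∈ L.filter (fun j => i ≤ j),
          (a i t * a j s + a i s * a j t) * (if i < j then c j i + c i j else c i i))
      = c t s + c s t := by
  -- abbreviations
  set h : Fin d → Fin d → F := fun i j => (a i t * a j s + a i s * a j t) * c i j with hh
  -- the double sum D equals the full symmetric sum S
  have hD : (∑ i ∈ L, ∑ j ∈ L.filter (fun j => i ≤ j),
          (a i t * a j s + a i s * a j t) * (if i < j then c j i + c i j else c i i))
      = ∑ i ∈ L, ∑ j ∈ L, h i j := by
    rw [sum_pairs L h, ← Finset.sum_add_distrib]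
    apply Finset.sum_congr rfl
    intro i hi
    -- split the `i ≤ j` filter into `i < j` and `j = i`
    have hfe : L.filter (fun j => i ≤ j)
        = insert i (L.filter (fun j => i < j)) := by
      ext x
      simp only [Finset.mem_filter, Finset.mem_insert]
      constructor
      · rintro ⟨hx, hix⟩
        rcases eq_or_lt_of_le hix with h | h
        · exact Or.inl h.symm
        · exact Or.inr ⟨hx, h⟩
      · rintro (rfl | ⟨hx, hix⟩)
        · exact ⟨hi, le_refl _⟩
        · exact ⟨hx, le_of_lt hix⟩
    rw [hfe, Finset.sum_insert (by simp)]
    rw [if_neg (lt_irrefl i)]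
    rw [add_comm]
    congr 1
    · apply Finset.sum_congr rfl
      intro j hj
      have hij : i < j := (Finset.mem_filter.mp hj).2
      rw [if_pos hij, hh]
      ring
  rw [hD]
  -- expand the left sums
  have hcs : ∀ j : Fin d, c j s = ∑ i ∈ L, a i s * c j i := fun j => has (c j) (hc j)
  have hct : ∀ j : Fin d, c j t = ∑ i ∈ L, a i t * c j i := fun j => hat (c j) (hc j)
  have e1 : (∑ i ∈ L, a i t * (c s i + c i s))
      = c s t + ∑ i ∈ L, ∑ j ∈ L, a i t * a j s * c i j := by
    simp_rw [mul_add, Finset.sum_add_distrib]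
    congr 1
    · exact (hct s).symm
    · apply Finset.sum_congr rfl
      intro i _
      rw [hcs i, Finset.mul_sum]
      apply Finset.sum_congr rfl
      intro j _
      ring
  have e2 : (∑ i ∈ L, a i s * (c t i + c i t))
      = c t s + ∑ i ∈ L, ∑ j ∈ L, a i s * a j t * c i j := by
    simp_rw [mul_add, Finset.sum_add_distrib]
    congr 1
    · exact (hcs t).symm
    · apply Finset.sum_congr rfl
      intro i _
      rw [hct i, Finset.mul_sum]
      apply Finset.sum_congr rfl
      intro j _
      ring
  rw [e1, e2]
  have e3 : ∑ i ∈ L, ∑ j ∈ L, h i j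
      = (∑ i ∈ L, ∑ j ∈ L, a i t * a j s * c i j)
        + ∑ i ∈ L, ∑ j ∈ L, a i s * a j t * c i j := by
    rw [← Finset.sum_add_distrib]
    apply Finset.sum_congr rfl
    intro i _
    rw [← Finset.sum_add_distrib]
    apply Finset.sum_congr rfl
    intro j _
    rw [hh]; ring
  rw [e3]
  ring
end
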